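/- arXiv:math/0303073 — 2 statements merged into one kernel-verified Lean document; each statement's English description precedes it below -/
import Mathlib

section
/- For every p ∈ ℝ³ and every unit vector n ∈ S², the vectors F₀(p) = (1, p¹/√2, p², p³, -p¹/√2, (p·p)/2) and F₁(p,n) = (0, (1+n¹)/2, n²/√2, n³/√2, (1-n¹)/2, (n·p)/√2) span a 2-dimensional totally isotropic subspace of ℝ^{(4,2)}: both vectors are isotropic, they are orthogonal to each other, and they are linearly independent. -/
/-- The bilinear form `⟨V,W⟩ = -v⁰w⁵ - v⁵w⁰ - v¹w⁴ - v⁴w¹ + v²w² + v³w³` on `ℝ⁶`. -/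
noncomputable def lieForm (v w : Fin 6 → ℝ) : ℝ :=
  -(v 0 * w 5) - v 5 * w 0 - v 1 * w 4 - v 4 * w 1 + v 2 * w 2 + v 3 * w 3

/-- Euclidean dot product on `ℝ³`. -/
noncomputable def dot3 (p q : Fin 3 → ℝ) : ℝ := p 0 * q 0 + p 1 * q 1 + p 2 * q 2

/-- `F₀(p) = (1, p¹/√2, p², p³, -p¹/√2, (p·p)/2)`. -/
noncomputable def F0 (p : Fin 3 → ℝ) : Fin 6 → ℝ :=
  ![1, p 0 / Real.sqrt 2, p 1, p 2, -(p 0) / Real.sqrt 2, dot3 p p / 2]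

/-- `F₁(p,n) = (0, (1+n¹)/2, n²/√2, n³/√2, (1-n¹)/2, (n·p)/√2)`. -/
noncomputable def F1 (p n : Fin 3 → ℝ) : Fin 6 → ℝ :=
  ![0, (1 + n 0) / 2, n 1 / Real.sqrt 2, n 2 / Real.sqrt 2, (1 - n 0) / 2,
    dot3 n p / Real.sqrt 2]

lemma lieForm_F0_self (p : Fin 3 → ℝ) : lieForm (F0 p) (F0 p) = 0 := by
  have hsqrt2 : Real.sqrt 2 ^ 2 = 2 := Real.sq_sqrt zero_le_two
  simp only [lieForm, F0, dot3, Matrix.cons_val]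
  field_simp
  linear_combination (-2 * p 0 ^ 2) * hsqrt2

lemma lieForm_F1_self (p n : Fin 3 → ℝ) :
    lieForm (F1 p n) (F1 p n) = (dot3 n n - 1) / 2 := by
  have hsqrt2 : Real.sqrt 2 ^ 2 = 2 := Real.sq_sqrt zero_le_two
  simp only [lieForm, F1, dot3, Matrix.cons_val]
  field_simp
  linear_combination (-2 * (n 1 ^ 2 + n 2 ^ 2)) * hsqrt2

lemma lieForm_F0_F1 (p n : Fin 3 → ℝ) : lieForm (F0 p) (F1 p n) = 0 := by
  simp only [lieForm, F0, F1, dot3, Matrix.cons_val]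
  field_simp
  ring

-- Coordinate 0 separates `F0 p` from the multiples of `F1 p n`, whose coordinates 1 and 4 sum to 1.
lemma linearIndependent_F0_F1 (p n : Fin 3 → ℝ) : LinearIndependent ℝ ![F0 p, F1 p n] := by
  rw [LinearIndependent.pair_iff]
  intro s t hst
  have h0 := congrFun hst 0
  have h1 := congrFun hst 1
  have h4 := congrFun hst 4
  simp only [F0, F1, Pi.add_apply, Pi.smul_apply, smul_eq_mul, Matrix.cons_val,
    Pi.zero_apply] at h0 h1 h4
  obtain rfl : s = 0 := by linarith
  exact ⟨rfl, by linarith⟩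

/-- For every `p ∈ ℝ³` and unit vector `n`, the vectors `F₀(p)` and `F₁(p,n)` span a
2-dimensional totally isotropic subspace: both are isotropic, they are orthogonal to
each other, and they are linearly independent. -/
theorem F0_F1_span_null_plane (p n : Fin 3 → ℝ) (hn : dot3 n n = 1) :
    lieForm (F0 p) (F0 p) = 0 ∧
    lieForm (F1 p n) (F1 p n) = 0 ∧
    lieForm (F0 p) (F1 p n) = 0 ∧
    LinearIndependent ℝ ![F0 p, F1 p n] := by
  refine ⟨lieForm_F0_self p, ?_, lieForm_F0_F1 p n, linearIndependent_F0_F1 p n⟩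
  rw [lieForm_F1_self, hn, sub_self, zero_div]
end

section
/- The map F sending (p,n) ∈ ℝ³ × S² to the plane spanned by F₀(p) and F₁(p,n) in ℝ^{(4,2)} is injective: if span{F₀(p),F₁(p,n)} = span{F₀(q),F₁(q,m)} then p = q and n = m. -/
/-!
The linear functionals `v ↦ v⁰` and `v ↦ v¹ + v⁴` take the values `(1, 0)` on `F₀(p)` and
`(0, 1)` on `F₁(p,n)` for every `(p, n)`. Hence `F₀(p)` and `F₁(p,n)` are recovered from the
plane they span as its unique vectors with these coordinates, and `F₀` and `F₁(p, ·)` are injective.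
-/

theorem Submodule.eq_smul_add_smul_of_mem_span_pair {R M : Type*} [CommSemiring R]
    [AddCommMonoid M] [Module R M] {x y v : M} (φ ψ : M →ₗ[R] R) (hφx : φ x = 1)
    (hφy : φ y = 0) (hψx : ψ x = 0) (hψy : ψ y = 1) (hv : v ∈ span R {x, y}) :
    v = φ v • x + ψ v • y := by
  obtain ⟨a, b, rfl⟩ := mem_span_pair.mp hv
  simp [hφx, hφy, hψx, hψy]

theorem F0_injective : Function.Injective F0 := by
  intro p q h
  have h1 := congrFun h 1
  have h2 := congrFun h 2
  have h3 := congrFun h 3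
  simp only [F0, Matrix.cons_val] at h1 h2 h3
  ext i; fin_cases i <;> simp_all

theorem F1_injective (p : Fin 3 → ℝ) : Function.Injective (F1 p) := by
  intro n m h
  have h1 := congrFun h 1
  have h2 := congrFun h 2
  have h3 := congrFun h 3
  simp only [F1, Matrix.cons_val] at h1 h2 h3
  ext i; fin_cases i <;> simp_all

theorem F0_zero (p : Fin 3 → ℝ) : F0 p 0 = 1 := rfl

theorem F1_zero (p n : Fin 3 → ℝ) : F1 p n 0 = 0 := rfl

theorem F0_one_add_four (p : Fin 3 → ℝ) : F0 p 1 + F0 p 4 = 0 := by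
  simp [F0, neg_div]

theorem F1_one_add_four (p n : Fin 3 → ℝ) : F1 p n 1 + F1 p n 4 = 1 := by
  simp only [F1, Matrix.cons_val_one, Matrix.cons_val_zero, Matrix.cons_val]
  ring

theorem eq_F0_add_F1_of_mem_span {p n : Fin 3 → ℝ} {v : Fin 6 → ℝ}
    (hv : v ∈ Submodule.span ℝ {F0 p, F1 p n}) : v = v 0 • F0 p + (v 1 + v 4) • F1 p n :=
  let π : Fin 6 → (Fin 6 → ℝ) →ₗ[ℝ] ℝ := LinearMap.proj
  Submodule.eq_smul_add_smul_of_mem_span_pair (π 0) (π 1 + π 4)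
    (F0_zero p) (F1_zero p n) (F0_one_add_four p) (F1_one_add_four p n) hv

theorem F_injective_general (p q n m : Fin 3 → ℝ)
    (h : Submodule.span ℝ {F0 p, F1 p n} = Submodule.span ℝ {F0 q, F1 q m}) :
    p = q ∧ n = m := by
  have mem {v} (hv : v ∈ ({F0 q, F1 q m} : Set (Fin 6 → ℝ))) :
      v = v 0 • F0 p + (v 1 + v 4) • F1 p n :=
    eq_F0_add_F1_of_mem_span (h ▸ Submodule.subset_span hv)
  have hF0 : F0 q = F0 p := by
    simpa [F0_zero, F0_one_add_four] using mem (Set.mem_insert _ _)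
  have hF1 : F1 q m = F1 p n := by
    simpa [F1_zero, F1_one_add_four] using mem (Set.mem_insert_of_mem _ rfl)
  obtain rfl := F0_injective hF0
  exact ⟨rfl, (F1_injective q hF1).symm⟩

/-- The map `F : ℝ³ × S² → 𝒦`, `(p,n) ↦ span{F₀(p), F₁(p,n)}`, is injective. -/
theorem F_injective (p q n m : Fin 3 → ℝ) (hn : dot3 n n = 1) (hm : dot3 m m = 1)
    (h : Submodule.span ℝ {F0 p, F1 p n} = Submodule.span ℝ {F0 q, F1 q m}) :
    p = q ∧ n = m :=
  F_injective_general p q n m h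
end
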